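/- In a multiplicative lattice L, the product of any two z-elements is a z-element if and only if every basic z-element m_a = ⋀{m maximal : a ≤ m} is idempotent (i.e., (m_a)^2 = m_a for all a ∈ L). -/

import Mathlib

/-- A multiplicative lattice: a complete lattice with an associative, commutative
multiplication distributing over arbitrary joins, with the top element as unit. -/
class MultiplicativeLattice (L : Type*) extends CompleteLattice L, CommMonoid L where
  mul_sSup : ∀ (a : L) (s : Set L), a * sSup s = ⨆ b ∈ s, a * b
  one_eq_top : (1 : L) = ⊤

variable {L : Type*} [MultiplicativeLattice L]

/-- A maximal element: proper, and anything properly above it up to (but not) ⊤ equals it. -/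
def IsMaxElt (m : L) : Prop := m ≠ ⊤ ∧ ∀ x : L, m ≤ x → x ≠ ⊤ → m = x

/-- The set of maximal elements above `a`. -/
def MSet (a : L) : Set L := {m | IsMaxElt m ∧ a ≤ m}

/-- A z-element: `M_a ⊇ M_b` and `b ≤ x` imply `a ≤ x`. -/
def IsZ (x : L) : Prop := ∀ a b : L, MSet b ⊆ MSet a → b ≤ x → a ≤ x

/-- The top element 1 = ⊤ is compact. -/
def OneCompact (L : Type*) [MultiplicativeLattice L] : Prop :=
  ∀ s : Set L, sSup s = ⊤ → ∃ t : Finset L, ↑t ⊆ s ∧ t.sup id = ⊤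

/-- The z-closure of an element: meet of all z-elements above it. -/
noncomputable def zCl (a : L) : L := sInf {z : L | IsZ z ∧ a ≤ z}

/-
Maximal elements are prime, so the maximal elements above `x * y` are those above `x` or
above `y`. Also `m_a` is a z-element with `m_{m_a} = m_a`. If
products of z-elements are z-elements, `m_a ^ 2` is a z-element with the same maximal elements
above it as `m_a`, forcing `m_a ≤ m_a ^ 2`. Conversely, for z-elements `x`, `y` the element
`m_{x*y}` lies below both `x` and `y`, so idempotency gives `m_{x*y} = m_{x*y} ^ 2 ≤ x * y`.
-/

namespace MultiplicativeLattice

instance : IsQuantale L where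
  mul_sSup_distrib := mul_sSup
  sSup_mul_distrib s y := by simp only [mul_comm _ y, mul_sSup]

theorem mul_le_left (a b : L) : a * b ≤ a :=
  mul_le_of_le_one_right' (one_eq_top (L := L) ▸ le_top)

theorem mul_le_right (a b : L) : a * b ≤ b :=
  mul_comm a b ▸ mul_le_left b a

theorem sq_le (a : L) : a ^ 2 ≤ a :=
  sq a ▸ mul_le_left a a

end MultiplicativeLattice

open MultiplicativeLattice Quantale

theorem IsMaxElt.le_or_le_of_mul_le {m x y : L} (hm : IsMaxElt m) (h : x * y ≤ m) :
    x ≤ m ∨ y ≤ m := by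
  refine or_iff_not_imp_left.mpr fun hx => ?_
  have hmx : m ⊔ x = ⊤ := by
    by_contra hne
    exact hx (hm.2 _ le_sup_left hne ▸ le_sup_right)
  calc y = (m ⊔ x) * y := by rw [hmx, ← one_eq_top, one_mul]
    _ = m * y ⊔ x * y := sup_mul_distrib
    _ ≤ m := sup_le (mul_le_left m y) h

theorem MSet_mul (x y : L) : MSet (x * y) = MSet x ∪ MSet y := by
  ext m
  constructor
  · rintro ⟨hm, hle⟩
    exact (hm.le_or_le_of_mul_le hle).imp (⟨hm, ·⟩) (⟨hm, ·⟩)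
  · rintro (⟨hm, hle⟩ | ⟨hm, hle⟩)
    · exact ⟨hm, (mul_le_left x y).trans hle⟩
    · exact ⟨hm, (mul_le_right x y).trans hle⟩

theorem MSet_sq (x : L) : MSet (x ^ 2) = MSet x := by
  rw [sq, MSet_mul, Set.union_self]

theorem le_sInf_MSet (a : L) : a ≤ sInf (MSet a) :=
  le_sInf fun _ hm => hm.2

theorem MSet_sInf_MSet (a : L) : MSet (sInf (MSet a)) = MSet a :=
  Set.ext fun _ => ⟨fun hm => ⟨hm.1, (le_sInf_MSet a).trans hm.2⟩, fun hm => ⟨hm.1, sInf_le hm⟩⟩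

theorem isZ_iff_sInf_MSet_le (x : L) : IsZ x ↔ sInf (MSet x) ≤ x := by
  refine ⟨fun hz => hz _ x (fun m hm => ⟨hm.1, sInf_le hm⟩) le_rfl, fun hle a b hsub hbx => ?_⟩
  refine le_trans (le_sInf fun m hm => ?_) hle
  exact (hsub ⟨hm.1, hbx.trans hm.2⟩).2

theorem isZ_sInf_MSet (a : L) : IsZ (sInf (MSet a)) := by
  rw [isZ_iff_sInf_MSet_le, MSet_sInf_MSet]

theorem stmt17_general :
    (∀ a b : L, IsZ a → IsZ b → IsZ (a * b)) ↔
      (∀ a : L, (sInf (MSet a)) ^ 2 = sInf (MSet a)) := by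
  constructor
  · intro hmul a
    set c := sInf (MSet a)
    have hc : IsZ c := isZ_sInf_MSet a
    have hsq : sInf (MSet (c ^ 2)) ≤ c ^ 2 := (isZ_iff_sInf_MSet_le _).mp (sq c ▸ hmul c c hc hc)
    rw [MSet_sq, MSet_sInf_MSet] at hsq
    exact (sq_le c).antisymm hsq
  · intro hidem x y hx hy
    rw [isZ_iff_sInf_MSet_le]
    set c := sInf (MSet (x * y))
    have hcx : c ≤ x :=
      (sInf_le_sInf (MSet_mul x y ▸ Set.subset_union_left)).trans ((isZ_iff_sInf_MSet_le x).mp hx)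
    have hcy : c ≤ y :=
      (sInf_le_sInf (MSet_mul x y ▸ Set.subset_union_right)).trans ((isZ_iff_sInf_MSet_le y).mp hy)
    calc c = c ^ 2 := (hidem _).symm
      _ = c * c := sq c
      _ ≤ x * y := mul_le_mul' hcx hcy

theorem stmt17 (h : OneCompact L) :
    (∀ a b : L, IsZ a → IsZ b → IsZ (a * b)) ↔
      (∀ a : L, (sInf (MSet a)) ^ 2 = sInf (MSet a)) :=
  stmt17_general
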